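/- arXiv:1107.3329 — 2 statements merged into one kernel-verified Lean document; each statement's English description precedes it below -/
import Mathlib

section
/- For any 2×2 matrices A, B, C over a commutative ring, tr(ABC) + tr(CBA) + tr(A)tr(B)tr(C) = tr(B)tr(AC) + tr(AB)tr(C) + tr(A)tr(BC) (Procesi's F-relation in dimension 2). -/
theorem procesi_F_relation (k : Type*) [CommRing k] (A B C : Matrix (Fin 2) (Fin 2) k) :
    Matrix.trace (A * B * C) + Matrix.trace (C * B * A)
      + Matrix.trace A * Matrix.trace B * Matrix.trace C =
    Matrix.trace B * Matrix.trace (A * C) + Matrix.trace (A * B) * Matrix.trace C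
      + Matrix.trace A * Matrix.trace (B * C) := by
  simp [Matrix.trace, Matrix.mul_apply, Matrix.diag, Fin.sum_univ_two]
  ring
end

section
/- For vectors v, w, v', w' in k² and 2×2 matrices A, B, with Θ the symplectic outer product, tr(A·Θ(v,w)·B·Θ(v',w')) = tr(A·Θ(v,w'))·tr(B·Θ(v',w)). -/
/-- The standard symplectic form on `k²`: `ω(p,q) = p₁q₂ − q₁p₂`. -/
def omegaForm {k : Type*} [CommRing k] (p q : Fin 2 → k) : k :=
  p 0 * q 1 - q 0 * p 1

/-- The symplectic outer product `Θ(v,w) = v·w^⊥`, the matrix acting by `u ↦ v·ω(w,u)`. -/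
def outerTheta {k : Type*} [CommRing k] (v w : Fin 2 → k) : Matrix (Fin 2) (Fin 2) k :=
  !![v 0 * (-(w 1)), v 0 * w 0; v 1 * (-(w 1)), v 1 * w 0]

theorem trace_outerTheta_mul (k : Type*) [Field k]
    (v w v' w' : Fin 2 → k) (A B : Matrix (Fin 2) (Fin 2) k) :
    Matrix.trace (A * outerTheta v w * B * outerTheta v' w') =
      Matrix.trace (A * outerTheta v w') * Matrix.trace (B * outerTheta v' w) := by
  simp [outerTheta, Matrix.trace_fin_two, Matrix.mul_apply, Fin.sum_univ_two]
  ring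
end
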